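/- Let M be a transitive Kripke model validating every instance of C_n, and M_Φ its transitive filtration through a finite subformula-closed set Φ. Then for every R_Φ-cluster C there exist x* ∈ W with [x*] ∈ C and a subset C* ⊆ C with at most n elements such that: x* ⇝ α for all α ∈ C*, and for all y ∈ W, if x* R y and [y] ∈ C then [y] ∈ C* and y ⇝ α for all α ∈ C*. Moreover if C is degenerate then C* is empty. -/

import Mathlib

/-- Modal formulas: variables, ⊤, ¬, ∧, □. -/
inductive Fml : Type
  | var : ℕ → Fml
  | top : Fml
  | neg : Fml → Fml
  | and : Fml → Fml → Fml
  | box : Fml → Fml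
deriving DecidableEq

namespace Fml
/-- Material implication, defined from ¬ and ∧. -/
def imp (φ ψ : Fml) : Fml := .neg (.and φ (.neg ψ))
/-- Disjunction. -/
def or (φ ψ : Fml) : Fml := .neg (.and (.neg φ) (.neg ψ))
/-- ◇φ := ¬□¬φ. -/
def dia (φ : Fml) : Fml := .neg (.box (.neg φ))
/-- □*φ := φ ∧ □φ. -/
def boxs (φ : Fml) : Fml := .and φ (.box φ)
/-- ◇*φ := φ ∨ ◇φ. -/
def dias (φ : Fml) : Fml := Fml.or φ (dia φ)
end Fml

/-- Kripke satisfaction. -/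
def sat {W : Type} (R : W → W → Prop) (V : ℕ → Set W) : W → Fml → Prop
  | x, .var p => x ∈ V p
  | _, .top => True
  | x, .neg φ => ¬ sat R V x φ
  | x, .and φ ψ => sat R V x φ ∧ sat R V x ψ
  | x, .box φ => ∀ y, R x y → sat R V y φ

/-- P_n(φ0; φ1,...,φn): P_0(φ0) = ◇φ0, P_n(φ0,φ1,...,φn) = ◇(φ1 ∧ P_{n-1}(φ0,φ2,...,φn)). -/
def Pfml (φ0 : Fml) : List Fml → Fml
  | [] => φ0.dia
  | ψ :: rest => (Fml.and ψ (Pfml φ0 rest)).dia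

/-- Conjunction of ¬(φ ∧ ψ) for ψ in the list. -/
def conjNeg (φ : Fml) : List Fml → Fml
  | [] => .top
  | ψ :: rest => .and (.neg (.and φ ψ)) (conjNeg φ rest)

/-- D_n: pairwise disjointness conjunction ⋀_{i<j} ¬(φ_i ∧ φ_j). -/
def Dfml : List Fml → Fml
  | [] => .top
  | φ :: rest => .and (conjNeg φ rest) (Dfml rest)

/-- The scheme C_n instance on φ0,φ1,...,φn (φs = [φ1,...,φn]). -/
def Cfml (φ0 : Fml) (φs : List Fml) : Fml :=
  ((Dfml (φ0 :: φs)).boxs).imp ((φ0.dia).imp ((Fml.and φ0 (Fml.neg (Pfml φ0 φs))).dia))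

/-- The scheme C_n* instance: as C_n but with ◇* in the consequent. -/
def CfmlStar (φ0 : Fml) (φs : List Fml) : Fml :=
  ((Dfml (φ0 :: φs)).boxs).imp ((φ0.dia).imp ((Fml.and φ0 (Fml.neg (Pfml φ0 φs))).dias))

/-- An ascending R-chain. -/
def AscChain {W : Type} (R : W → W → Prop) (x : ℕ → W) : Prop := ∀ m, R (x m) (x (m+1))

/-- A strictly ascending R-chain. -/
def StrictAscChain {W : Type} (R : W → W → Prop) (x : ℕ → W) : Prop :=
  AscChain R x ∧ ∀ m, ¬ R (x (m+1)) (x m)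

/-- The R-cluster of x. -/
def cluster {W : Type} (R : W → W → Prop) (x : W) : Set W := {y | x = y ∨ (R x y ∧ R y x)}

/-- The frame has a cycle of length k (k ≥ 1): k distinct points x_0 R x_1 R ... R x_{k-1} R x_0. -/
def HasCycle {W : Type} (R : W → W → Prop) (k : ℕ) : Prop :=
  1 ≤ k ∧ ∃ x : ℕ → W, (∀ i j, i < k → j < k → x i = x j → i = j) ∧
    ∀ i < k, R (x i) (x ((i+1) % k))

/-- Circumference at most n: every cycle has length ≤ n. -/
def CircumLE {W : Type} (R : W → W → Prop) (n : ℕ) : Prop := ∀ k, HasCycle R k → k ≤ n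

/-- The frame (W,R) validates the scheme C_n. -/
def ValidatesCn {W : Type} (R : W → W → Prop) (n : ℕ) : Prop :=
  ∀ (V : ℕ → Set W) (x : W) (φ0 : Fml) (φs : List Fml), φs.length = n →
    sat R V x (Cfml φ0 φs)

/-- A Boolean valuation on formulas (box-formulas and variables as atoms). -/
def BoolEval (w : Fml → Bool) : Prop :=
  w .top = true ∧ (∀ φ, w (.neg φ) = !w φ) ∧ (∀ φ ψ, w (.and φ ψ) = (w φ && w ψ))

/-- Propositional tautologies. -/
def Tautology (φ : Fml) : Prop := ∀ w, BoolEval w → w φ = true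

/-- Theorems of the smallest normal modal logic containing the axiom set Ax. -/
inductive Prov (Ax : Set Fml) : Fml → Prop
  | taut {φ} : Tautology φ → Prov Ax φ
  | kax (φ ψ) : Prov Ax ((Fml.box (φ.imp ψ)).imp ((Fml.box φ).imp (Fml.box ψ)))
  | ax {φ} : φ ∈ Ax → Prov Ax φ
  | mp {φ ψ} : Prov Ax (φ.imp ψ) → Prov Ax φ → Prov Ax ψ
  | nec {φ} : Prov Ax φ → Prov Ax (.box φ)

/-- All instances of the transitivity scheme 4. -/
def Ax4 : Set Fml := {χ | ∃ φ, χ = (Fml.box φ).imp (Fml.box (Fml.box φ))}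

/-- Axioms of K4C_n: scheme 4 together with all instances of scheme C_n. -/
def AxK4C (n : ℕ) : Set Fml :=
  Ax4 ∪ {χ | ∃ (φ0 : Fml) (φs : List Fml), φs.length = n ∧ χ = Cfml φ0 φs}

/-- Φ is closed under subformulas. -/
def SubClosed (Φ : Set Fml) : Prop :=
  (∀ φ, Fml.neg φ ∈ Φ → φ ∈ Φ) ∧ (∀ φ ψ, Fml.and φ ψ ∈ Φ → φ ∈ Φ ∧ ψ ∈ Φ) ∧
    (∀ φ, Fml.box φ ∈ Φ → φ ∈ Φ)

/-- x and y satisfy the same formulas of Φ. -/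
def eqv {W : Type} (R : W → W → Prop) (V : ℕ → Set W) (Φ : Set Fml) (x y : W) : Prop :=
  ∀ φ ∈ Φ, (sat R V x φ ↔ sat R V y φ)

/-- The filtration equivalence class [x]. -/
def ecl {W : Type} (R : W → W → Prop) (V : ℕ → Set W) (Φ : Set Fml) (x : W) : Set W :=
  {y | eqv R V Φ x y}

/-- The transitive filtration relation (on representatives):
[x] R_Φ [y] iff for all □φ ∈ Φ true at x, both φ and □φ are true at y. -/
def Rf {W : Type} (R : W → W → Prop) (V : ℕ → Set W) (Φ : Set Fml) (x y : W) : Prop :=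
  ∀ φ, Fml.box φ ∈ Φ → sat R V x (Fml.box φ) → (sat R V y φ ∧ sat R V y (Fml.box φ))

/-- The R_Φ-cluster of [x], as a set of equivalence classes. -/
def fCluster {W : Type} (R : W → W → Prop) (V : ℕ → Set W) (Φ : Set Fml) (x : W) :
    Set (Set W) :=
  {α | ∃ y, α = ecl R V Φ y ∧ (eqv R V Φ x y ∨ (Rf R V Φ x y ∧ Rf R V Φ y x))}

/-
Among the points whose class lies in the cluster C, choose x* seeing as few classes of C as
possible, and let C* be the classes of C seen from x*. Whatever an R-successor of x* sees, x*
sees as well, so by minimality every successor y of x* with [y] ∈ C sees exactly C*.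
Filtration classes are the truth sets of characteristic formulas χ_α, pairwise disjoint. If C*
had n + 1 classes α₀, …, αₙ, the instance of C_n on χ_{α₀}, …, χ_{αₙ} at x* would produce a
successor w ∈ α₀ refuting P_n; but from any point of α₀ ∪ … ∪ αₙ above x* one can step into
each αᵢ, which builds the chain P_n asks for. Finally x* R y with [y] ∈ C makes [y] reflexive,
so in a degenerate cluster C* is empty.
-/

section Semantics

variable {W : Type} {R : W → W → Prop} {V : ℕ → Set W} {x : W} {φ ψ φ0 : Fml} {φs : List Fml}

theorem sat_dia : sat R V x φ.dia ↔ ∃ y, R x y ∧ sat R V y φ := by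
  simp [Fml.dia, sat]

theorem sat_imp : sat R V x (φ.imp ψ) ↔ (sat R V x φ → sat R V x ψ) := by
  simp [Fml.imp, sat]

theorem sat_conjNeg {l : List Fml} :
    sat R V x (conjNeg φ l) ↔ ∀ ψ ∈ l, ¬(sat R V x φ ∧ sat R V x ψ) := by
  induction l with
  | nil => simp [conjNeg, sat]
  | cons ψ l ih => simp [conjNeg, sat, ih]

theorem sat_Dfml {l : List Fml} :
    sat R V x (Dfml l) ↔ l.Pairwise fun φ ψ => ¬(sat R V x φ ∧ sat R V x ψ) := by
  induction l with
  | nil => simp [Dfml, sat]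
  | cons φ l ih => rw [Dfml, sat, ih, sat_conjNeg, List.pairwise_cons]

theorem sat_Cfml :
    sat R V x (Cfml φ0 φs) ↔
      ((sat R V x (Dfml (φ0 :: φs)) ∧ ∀ y, R x y → sat R V y (Dfml (φ0 :: φs))) →
        (∃ y, R x y ∧ sat R V y φ0) → ∃ w, R x w ∧ sat R V w φ0 ∧ ¬ sat R V w (Pfml φ0 φs)) := by
  simp only [Cfml, Fml.boxs, sat_imp, sat_dia, sat]

theorem sat_Pfml_of_forall_exists (U : Set W)
    (hU : ∀ z ∈ U, ∀ ψ ∈ φ0 :: φs, ∃ u ∈ U, R z u ∧ sat R V u ψ) :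
    ∀ z ∈ U, sat R V z (Pfml φ0 φs) := by
  induction φs with
  | nil =>
    intro z hz
    obtain ⟨u, -, hzu, hu⟩ := hU z hz φ0 List.mem_cons_self
    exact sat_dia.mpr ⟨u, hzu, hu⟩
  | cons ψ φs ih =>
    intro z hz
    obtain ⟨u, huU, hzu, hu⟩ := hU z hz ψ (List.mem_cons_of_mem _ List.mem_cons_self)
    have hU' : ∀ z ∈ U, ∀ ψ ∈ φ0 :: φs, ∃ u ∈ U, R z u ∧ sat R V u ψ :=
      fun z hz ψ hψ => hU z hz ψ (List.cons_subset_cons _ (List.subset_cons_self _ _) hψ)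
    exact sat_dia.mpr ⟨u, hzu, hu, ih hU' u huU⟩

end Semantics

section ValidityOfCn

variable {W : Type} {R : W → W → Prop} {V : ℕ → Set W} {x : W} {φ0 : Fml} {φs : List Fml}

theorem not_sat_Cfml (hT : Transitive R) (hD : ∀ z, sat R V z (Dfml (φ0 :: φs)))
    (hx : ∃ y, R x y ∧ sat R V y φ0)
    (hseen : ∀ z, R x z → (∃ ψ ∈ φ0 :: φs, sat R V z ψ) →
      ∀ ψ ∈ φ0 :: φs, ∃ u, R z u ∧ sat R V u ψ) :
    ¬ sat R V x (Cfml φ0 φs) := by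
  intro hC
  obtain ⟨w, hxw, hw0, hwP⟩ := sat_Cfml.mp hC ⟨hD x, fun y _ => hD y⟩ hx
  refine hwP (sat_Pfml_of_forall_exists {z | R x z ∧ ∃ ψ ∈ φ0 :: φs, sat R V z ψ} ?_ w
    ⟨hxw, φ0, List.mem_cons_self, hw0⟩)
  rintro z ⟨hxz, hz⟩ ψ hψ
  obtain ⟨u, hzu, hu⟩ := hseen z hxz hz ψ hψ
  exact ⟨u, ⟨hT hxz hzu, ψ, hψ, hu⟩, hzu, hu⟩

def truthSet (R : W → W → Prop) (V : ℕ → Set W) (φ : Fml) : Set W := {z | sat R V z φ}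

theorem ncard_le_of_sat_Cfml {n : ℕ} (hT : Transitive R)
    (hC : ∀ φ0 φs, φs.length = n → sat R V x (Cfml φ0 φs)) {A : Set (Set W)} (hAfin : A.Finite)
    (hAdef : A ⊆ Set.range (truthSet R V)) (hAdisj : A.PairwiseDisjoint id)
    (hx : ∀ α ∈ A, ∃ y ∈ α, R x y) (hseen : ∀ z, R x z → ∀ α ∈ A, z ∈ α → ∀ β ∈ A, ∃ u ∈ β, R z u) :
    A.ncard ≤ n := by
  by_contra! hn
  obtain ⟨s, rfl⟩ := hAfin.exists_finset_coe
  rw [Set.ncard_coe_finset] at hn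
  obtain ⟨t, hts, htcard⟩ := Finset.exists_subset_card_eq hn
  have hlen : t.toList.length = n + 1 := by rw [Finset.length_toList, htcard]
  obtain ⟨α0, l, hl⟩ := List.exists_cons_of_length_eq_add_one hlen
  have hlA : ∀ α ∈ α0 :: l, α ∈ (s : Set (Set W)) := fun α hα =>
    hts (Finset.mem_toList.mp (hl ▸ hα))
  have : Nonempty Fml := ⟨.top⟩
  choose! χ hχ using fun α (hα : α ∈ (s : Set (Set W))) => hAdef hα
  have hmem : ∀ α ∈ α0 :: l, ∀ z, sat R V z (χ α) ↔ z ∈ α := fun α hα =>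
    Set.ext_iff.mp (hχ α (hlA α hα))
  refine not_sat_Cfml (φ0 := χ α0) (φs := l.map χ) hT ?_ ?_ ?_ (hC _ _ ?_)
  · intro z
    rw [sat_Dfml, ← List.map_cons, List.pairwise_map]
    refine (hl ▸ t.nodup_toList : (α0 :: l).Nodup).imp_of_mem ?_
    rintro α β hα hβ hne ⟨hzα, hzβ⟩
    exact Set.disjoint_left.mp (hAdisj (hlA α hα) (hlA β hβ) hne) ((hmem α hα z).mp hzα)
      ((hmem β hβ z).mp hzβ)
  · obtain ⟨y, hy, hxy⟩ := hx α0 (hlA α0 List.mem_cons_self)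
    exact ⟨y, hxy, (hmem α0 List.mem_cons_self y).mpr hy⟩
  · rintro z hxz ⟨_, hψ, hzψ⟩ _ hψ'
    rw [← List.map_cons, List.mem_map] at hψ hψ'
    obtain ⟨α, hα, rfl⟩ := hψ
    obtain ⟨β, hβ, rfl⟩ := hψ'
    obtain ⟨u, hu, hzu⟩ := hseen z hxz α (hlA α hα) ((hmem α hα z).mp hzψ) β (hlA β hβ)
    exact ⟨u, hzu, (hmem β hβ u).mpr hu⟩
  · rw [hl, List.length_cons] at hlen
    rw [List.length_map, Nat.succ_injective hlen]

end ValidityOfCn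

section Filtration

variable {W : Type} {R : W → W → Prop} {V : ℕ → Set W} {Φ : Set Fml} {a b c x y : W}

theorem eqv.refl (a : W) : eqv R V Φ a a := fun _ _ => Iff.rfl

theorem eqv.symm (h : eqv R V Φ a b) : eqv R V Φ b a := fun φ hφ => (h φ hφ).symm

theorem eqv.trans (h : eqv R V Φ a b) (h' : eqv R V Φ b c) : eqv R V Φ a c :=
  fun φ hφ => (h φ hφ).trans (h' φ hφ)

theorem ecl_eq_of_mem (h : y ∈ ecl R V Φ a) : ecl R V Φ y = ecl R V Φ a :=
  Set.ext fun _ => ⟨fun hz => h.trans hz, fun hz => h.symm.trans hz⟩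

theorem ecl_eq_ecl_iff : ecl R V Φ a = ecl R V Φ b ↔ eqv R V Φ a b :=
  ⟨fun h => (h ▸ eqv.refl b : b ∈ ecl R V Φ a), fun h => (ecl_eq_of_mem h).symm⟩

theorem pairwiseDisjoint_range_ecl : (Set.range (ecl R V Φ)).PairwiseDisjoint id := by
  rintro _ ⟨a, rfl⟩ _ ⟨b, rfl⟩ hne
  refine Set.disjoint_left.mpr fun z ha hb => hne ?_
  rw [← ecl_eq_of_mem ha, ecl_eq_of_mem hb]

theorem finite_range_ecl (hfin : Φ.Finite) : (Set.range (ecl R V Φ)).Finite := by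
  refine (hfin.finite_subsets.image fun s => {z | {φ ∈ Φ | sat R V z φ} = s}).subset ?_
  rintro _ ⟨y, rfl⟩
  refine ⟨{φ ∈ Φ | sat R V y φ}, Set.sep_subset _ _, Set.ext fun z => ?_⟩
  simp only [Set.mem_ofPred_eq, Set.ext_iff, and_congr_right_iff]
  exact ⟨fun h φ hφ => (h φ hφ).symm, fun h φ hφ => (h φ hφ).symm⟩

theorem exists_sat_iff_forall_mem (y : W) (L : List Fml) :
    ∃ χ, ∀ z, sat R V z χ ↔ ∀ φ ∈ L, (sat R V y φ ↔ sat R V z φ) := by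
  induction L with
  | nil => exact ⟨.top, by simp [sat]⟩
  | cons φ L ih =>
    obtain ⟨χ, hχ⟩ := ih
    by_cases hy : sat R V y φ
    · exact ⟨.and φ χ, by simp [sat, hχ, hy]⟩
    · exact ⟨.and φ.neg χ, by simp [sat, hχ, hy]⟩

theorem range_ecl_subset_range_truthSet (hfin : Φ.Finite) :
    Set.range (ecl R V Φ) ⊆ Set.range (truthSet R V) := by
  rintro _ ⟨y, rfl⟩
  obtain ⟨s, rfl⟩ := hfin.exists_finset_coe
  obtain ⟨χ, hχ⟩ := exists_sat_iff_forall_mem (R := R) (V := V) y s.toList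
  exact ⟨χ, Set.ext fun z => by simp [truthSet, hχ, ecl, eqv]⟩

theorem Rf.of_rel (hT : Transitive R) (h : R a b) : Rf R V Φ a b :=
  fun _ _ hb => ⟨hb b h, fun _ hc => hb _ (hT h hc)⟩

theorem Rf.trans (h : Rf R V Φ a b) (h' : Rf R V Φ b c) : Rf R V Φ a c :=
  fun φ hφ ha => h' φ hφ (h φ hφ ha).2

theorem Rf.congr_left (h : eqv R V Φ a b) (hac : Rf R V Φ a c) : Rf R V Φ b c :=
  fun φ hφ hb => hac φ hφ ((h _ hφ).mpr hb)

theorem Rf.congr_right (hsc : SubClosed Φ) (h : eqv R V Φ b c) (hab : Rf R V Φ a b) :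
    Rf R V Φ a c := by
  intro φ hφ ha
  obtain ⟨hb, hb'⟩ := hab φ hφ ha
  exact ⟨(h φ (hsc.2.2 φ hφ)).mp hb, (h _ hφ).mp hb'⟩

theorem fCluster_subset_range_ecl : fCluster R V Φ x ⊆ Set.range (ecl R V Φ) := by
  rintro _ ⟨y, rfl, -⟩
  exact ⟨y, rfl⟩

theorem ecl_mem_fCluster_iff (hsc : SubClosed Φ) :
    ecl R V Φ a ∈ fCluster R V Φ x ↔ eqv R V Φ x a ∨ (Rf R V Φ x a ∧ Rf R V Φ a x) := by
  constructor
  · rintro ⟨y, hay, hxy | ⟨hxy, hyx⟩⟩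
    all_goals have hya := (ecl_eq_ecl_iff.mp hay).symm
    · exact Or.inl (hxy.trans hya)
    · exact Or.inr ⟨hxy.congr_right hsc hya, hyx.congr_left hya⟩
  · exact fun h => ⟨a, rfl, h⟩

theorem Rf.self_of_rel_of_mem_fCluster (hT : Transitive R) (hsc : SubClosed Φ) (hab : R a b)
    (ha : ecl R V Φ a ∈ fCluster R V Φ x) (hb : ecl R V Φ b ∈ fCluster R V Φ x) :
    Rf R V Φ b b := by
  have hba : eqv R V Φ b a ∨ Rf R V Φ b a := by
    rcases (ecl_mem_fCluster_iff hsc).mp ha with hxa | ⟨hxa, -⟩ <;>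
      rcases (ecl_mem_fCluster_iff hsc).mp hb with hxb | ⟨-, hbx⟩
    · exact Or.inl (hxb.symm.trans hxa)
    · exact Or.inr (hbx.congr_right hsc hxa)
    · exact Or.inr (hxa.congr_left hxb)
    · exact Or.inr (hbx.trans hxa)
  rcases hba with hba | hba
  · exact (Rf.of_rel hT hab).congr_left hba.symm
  · exact hba.trans (Rf.of_rel hT hab)

end Filtration

section Seen

variable {W : Type} {R : W → W → Prop} {C : Set (Set W)} {x z : W}

def seen (R : W → W → Prop) (C : Set (Set W)) (x : W) : Set (Set W) := {α ∈ C | ∃ y ∈ α, R x y}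

theorem seen_subset_seen (hT : Transitive R) (h : R x z) : seen R C z ⊆ seen R C x :=
  fun _ ⟨hα, y, hy, hzy⟩ => ⟨hα, y, hy, hT h hzy⟩

theorem exists_forall_seen_eq (hT : Transitive R) (hC : C.Finite) {P : Set W} (hP : P.Nonempty) :
    ∃ x ∈ P, ∀ z ∈ P, R x z → seen R C z = seen R C x := by
  obtain ⟨x, hx, hmin⟩ :=
    exists_minimalFor_of_wellFoundedLT (· ∈ P) (fun z => (seen R C z).ncard) hP
  have hfin : (seen R C x).Finite := hC.subset (Set.sep_subset _ _)
  refine ⟨x, hx, fun z hz hxz => ?_⟩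
  have hsub := seen_subset_seen (C := C) hT hxz
  exact Set.eq_of_subset_of_ncard_le hsub (hmin hz (Set.ncard_le_ncard hsub hfin)) hfin

end Seen

/-- for each R_Φ-cluster C there are a critical point x* with [x*] ∈ C
and C* ⊆ C of size at most n such that x* sees into every α ∈ C*, and whenever
x* R y with [y] ∈ C, then [y] ∈ C* and y sees into every α ∈ C*; if C is
degenerate then C* = ∅. -/
theorem stmt9 {W : Type} (R : W → W → Prop) (V : ℕ → Set W) (Φ : Set Fml) (n : ℕ)
    (hT : Transitive R) (hfin : Φ.Finite) (hsc : SubClosed Φ)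
    (hC : ∀ (φ0 : Fml) (φs : List Fml), φs.length = n → ∀ x, sat R V x (Cfml φ0 φs)) :
    ∀ x : W, ∃ (xs : W) (Cs : Set (Set W)),
      ecl R V Φ xs ∈ fCluster R V Φ x ∧
      Cs ⊆ fCluster R V Φ x ∧ Cs.Finite ∧ Cs.ncard ≤ n ∧
      (∀ α ∈ Cs, ∃ y ∈ α, R xs y) ∧
      (∀ y, R xs y → ecl R V Φ y ∈ fCluster R V Φ x →
        ecl R V Φ y ∈ Cs ∧ ∀ α ∈ Cs, ∃ z ∈ α, R y z) ∧
      ((∀ y, ecl R V Φ y ∈ fCluster R V Φ x → ¬ Rf R V Φ y y) → Cs = ∅) := by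
  intro x
  set C := fCluster R V Φ x
  have hCfin : C.Finite := (finite_range_ecl hfin).subset fCluster_subset_range_ecl
  obtain ⟨xs, hxsC, hstable⟩ := exists_forall_seen_eq hT hCfin (P := {z | ecl R V Φ z ∈ C})
    ⟨x, (ecl_mem_fCluster_iff hsc).mpr (Or.inl (eqv.refl x))⟩
  have hseenC : seen R C xs ⊆ C := Set.sep_subset _ _
  have hseen_ecl := hseenC.trans fCluster_subset_range_ecl
  have hclosed : ∀ z, R xs z → ∀ α ∈ seen R C xs, z ∈ α → ∀ β ∈ seen R C xs, ∃ u ∈ β, R z u := by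
    rintro z hxz α ⟨hαC, -⟩ hzα β hβ
    obtain ⟨a, rfl⟩ := fCluster_subset_range_ecl hαC
    rw [← ecl_eq_of_mem hzα] at hαC
    exact (hstable z hαC hxz ▸ hβ).2
  refine ⟨xs, seen R C xs, hxsC, hseenC, hCfin.subset hseenC, ?_, fun α hα => hα.2, ?_, ?_⟩
  · exact ncard_le_of_sat_Cfml hT (fun φ0 φs h => hC φ0 φs h xs) (hCfin.subset hseenC)
      (hseen_ecl.trans (range_ecl_subset_range_truthSet hfin))
      (pairwiseDisjoint_range_ecl.subset hseen_ecl) (fun α hα => hα.2) hclosed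
  · intro y hxy hyC
    exact ⟨⟨hyC, y, eqv.refl y, hxy⟩, fun α hα => (hstable y hyC hxy ▸ hα).2⟩
  · intro hdeg
    refine Set.eq_empty_of_forall_notMem ?_
    rintro α ⟨hαC, y, hyα, hxy⟩
    obtain ⟨a, rfl⟩ := fCluster_subset_range_ecl hαC
    rw [← ecl_eq_of_mem hyα] at hαC
    exact hdeg y hαC (Rf.self_of_rel_of_mem_fCluster hT hsc hxy hxsC hαC)
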